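/- arXiv:2601.22413 — 2 statements merged into one kernel-verified Lean document; each statement's English description precedes it below -/
import Mathlib

section
/- For every integer n ≥ 2, ∑_{k=1}^∞ (log k + 1/k) H_n^k / k! ≤ e^{H_n} log H_n + 2 e^γ (n+1) / log n, where H_n is the n-th harmonic number and γ the Euler–Mascheroni constant. -/
/-- The `n`-th harmonic number `H_n = ∑_{j=1}^n 1/j`. -/
noncomputable def H (n : ℕ) : ℝ := ∑ j ∈ Finset.range n, (1 : ℝ) / (j + 1)

lemma harm_eq_H (n : ℕ) : (harmonic n : ℝ) = H n := by
  unfold harmonic H; push_cast; simp [one_div]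

theorem appendix_inequality (n : ℕ) (hn : 2 ≤ n) :
    ∑' k : ℕ, (Real.log (k + 1) + 1 / (k + 1)) * H n ^ (k + 1) / Nat.factorial (k + 1) ≤
      Real.exp (H n) * Real.log (H n) +
        2 * Real.exp Real.eulerMascheroniConstant * (n + 1) / Real.log n := by
  set x : ℝ := H n with hxdef
  -- basic facts about x = H n
  have hx32 : (3/2 : ℝ) ≤ x := by
    have hsub : Finset.range 2 ⊆ Finset.range n := Finset.range_subset_range.mpr hn
    have h2 : (3/2 : ℝ) = ∑ j ∈ Finset.range 2, (1 : ℝ) / (j + 1) := by norm_num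
    rw [hxdef, h2]
    unfold H
    exact Finset.sum_le_sum_of_subset_of_nonneg hsub (fun i _ _ => by positivity)
  have hx0 : (0 : ℝ) < x := by linarith
  have hx1 : (1 : ℝ) ≤ x := by linarith
  have hlogx0 : 0 ≤ Real.log x := Real.log_nonneg hx1
  have hlogn : Real.log n ≤ x := by
    have h := log_add_one_le_harmonic n
    rw [harm_eq_H] at h
    push_cast at h
    have h2 : Real.log n ≤ Real.log (n + 1) :=
      Real.log_le_log (by positivity) (by linarith)
    linarith
  have hlogn0 : 0 < Real.log n := by
    apply Real.log_pos
    exact_mod_cast (by omega : (1 : ℕ) < n)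
  have hxle : x ≤ Real.eulerMascheroniConstant + Real.log (n + 1) := by
    have h := Real.eulerMascheroniSeq_lt_eulerMascheroniConstant n
    unfold Real.eulerMascheroniSeq at h
    rw [harm_eq_H] at h
    push_cast at h
    linarith
  have hexpx : Real.exp x ≤ Real.exp Real.eulerMascheroniConstant * (n + 1) := by
    calc Real.exp x ≤ Real.exp (Real.eulerMascheroniConstant + Real.log (n + 1)) :=
          Real.exp_le_exp.mpr hxle
      _ = Real.exp Real.eulerMascheroniConstant * (n + 1) := by
          rw [Real.exp_add, Real.exp_log (by positivity)]
  -- series facts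
  set f : ℕ → ℝ := fun k => x ^ k / (Nat.factorial k : ℝ) with hfdef
  have hf : Summable f := Real.summable_pow_div_factorial x
  have hfsum : ∑' k, f k = Real.exp x := by
    rw [Real.exp_eq_exp_ℝ, NormedSpace.exp_eq_tsum_div]
  have hf1 : Summable (fun k => f (k + 1)) := hf.comp_injective Nat.succ_injective
  have hf1sum : ∑' k, f (k + 1) = Real.exp x - 1 := by
    have h := Summable.tsum_eq_zero_add hf
    have h0 : f 0 = 1 := by simp [hfdef]
    rw [h0] at h
    linarith [hfsum ▸ h]
  have hf2 : Summable (fun k => f (k + 2)) :=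
    hf.comp_injective (fun a b hab => by omega)
  have hf2sum : ∑' k, f (k + 2) = Real.exp x - 1 - x := by
    have h := Summable.tsum_eq_zero_add hf1
    have h1 : f (0 + 1) = x := by simp [hfdef]
    rw [h1] at h
    rw [hf1sum] at h
    linarith [h]
  -- the auxiliary function g k = x^(k+1)/(k+2)!
  set g : ℕ → ℝ := fun k => x ^ (k + 1) / (Nat.factorial (k + 2) : ℝ) with hgdef
  have hgf : ∀ k, g k = (1 / x) * f (k + 2) := by
    intro k
    simp only [hgdef, hfdef]
    field_simp
    ring
  have hg : Summable g := by
    have := hf2.mul_left (1 / x)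
    exact this.congr (fun k => (hgf k).symm)
  have hgsum : ∑' k, g k = (1 / x) * (Real.exp x - 1 - x) := by
    calc ∑' k, g k = ∑' k, (1 / x) * f (k + 2) := tsum_congr hgf
      _ = (1 / x) * ∑' k, f (k + 2) := tsum_mul_left
      _ = (1 / x) * (Real.exp x - 1 - x) := by rw [hf2sum]
  -- the bounding function b
  set b : ℕ → ℝ := fun k => (Real.log x - 1) * f (k + 1) + f k + 2 * g k with hbdef
  have hb : Summable b := ((hf1.mul_left _).add hf).add (hg.mul_left 2)
  have hbsum : ∑' k, b k =
      (Real.log x - 1) * (Real.exp x - 1) + Real.exp x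
        + 2 * ((1 / x) * (Real.exp x - 1 - x)) := by
    rw [hbdef]
    rw [Summable.tsum_add ((hf1.mul_left _).add hf) (hg.mul_left 2),
        Summable.tsum_add (hf1.mul_left _) hf, tsum_mul_left, tsum_mul_left,
        hf1sum, hfsum, hgsum]
  -- termwise bound
  set a : ℕ → ℝ := fun k =>
    (Real.log (k + 1) + 1 / (k + 1)) * x ^ (k + 1) / (Nat.factorial (k + 1) : ℝ) with hadef
  have ha_nonneg : ∀ k, 0 ≤ a k := by
    intro k
    have hL : 0 ≤ Real.log ((k : ℝ) + 1) := Real.log_nonneg (le_add_of_nonneg_left (Nat.cast_nonneg k))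
    have h1 : 0 ≤ (1 : ℝ) / ((k : ℝ) + 1) := by positivity
    have : (0 : ℝ) ≤ x ^ (k + 1) / (Nat.factorial (k + 1) : ℝ) :=
      div_nonneg (pow_nonneg hx0.le _) (Nat.cast_nonneg _)
    simp only [hadef]
    rw [mul_div_assoc]
    exact mul_nonneg (by linarith) this
  have hab : ∀ k, a k ≤ b k := by
    intro k
    have hq0 : (0 : ℝ) < (Nat.factorial (k + 1) : ℝ) := by
      exact_mod_cast Nat.factorial_pos (k + 1)
    have hp0 : (0 : ℝ) ≤ x ^ (k + 1) := by positivity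
    have hc0 : (0 : ℝ) < (k : ℝ) + 1 := by positivity
    -- log bound
    have hL : Real.log ((k : ℝ) + 1) ≤ Real.log x + (((k : ℝ) + 1) / x - 1) := by
      have h := Real.log_le_sub_one_of_pos (show 0 < ((k : ℝ) + 1) / x by positivity)
      rw [Real.log_div (by positivity) hx0.ne'] at h
      linarith
    have hstep1 : Real.log ((k : ℝ) + 1) * (x ^ (k + 1) / (Nat.factorial (k + 1) : ℝ)) ≤
        (Real.log x - 1) * f (k + 1) + f k := by
      have hmul := mul_le_mul_of_nonneg_right hL (div_nonneg hp0 hq0.le)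
      have hid : (Real.log x + (((k : ℝ) + 1) / x - 1)) * (x ^ (k + 1) / (Nat.factorial (k + 1) : ℝ))
          = (Real.log x - 1) * f (k + 1) + f k := by
        simp only [hfdef]
        have hfact : (Nat.factorial (k + 1) : ℝ) = ((k : ℝ) + 1) * (Nat.factorial k : ℝ) := by
          rw [Nat.factorial_succ]; push_cast; ring
        rw [hfact]
        have hk0 : (Nat.factorial k : ℝ) ≠ 0 := by
          exact_mod_cast (Nat.factorial_pos k).ne'
        field_simp
        ring
      linarith [hid ▸ hmul]
    have hstep2 : (1 / ((k : ℝ) + 1)) * (x ^ (k + 1) / (Nat.factorial (k + 1) : ℝ)) ≤ 2 * g k := by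
      have hfact2 : (Nat.factorial (k + 2) : ℝ) = ((k : ℝ) + 2) * (Nat.factorial (k + 1) : ℝ) := by
        rw [show k + 2 = (k + 1) + 1 from rfl, Nat.factorial_succ]; push_cast; ring
      have key : (1 : ℝ) / (((k : ℝ) + 1) * (Nat.factorial (k + 1) : ℝ)) ≤
          2 / (Nat.factorial (k + 2) : ℝ) := by
        rw [hfact2, div_le_div_iff₀ (by positivity) (by positivity)]
        nlinarith [hq0]
      have := mul_le_mul_of_nonneg_left key hp0
      simp only [hgdef]
      calc (1 / ((k : ℝ) + 1)) * (x ^ (k + 1) / (Nat.factorial (k + 1) : ℝ))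
          = x ^ (k + 1) * ((1 : ℝ) / (((k : ℝ) + 1) * (Nat.factorial (k + 1) : ℝ))) := by
            field_simp
        _ ≤ x ^ (k + 1) * (2 / (Nat.factorial (k + 2) : ℝ)) := this
        _ = 2 * (x ^ (k + 1) / (Nat.factorial (k + 2) : ℝ)) := by ring
    have hsplit : a k = Real.log ((k : ℝ) + 1) * (x ^ (k + 1) / (Nat.factorial (k + 1) : ℝ))
        + (1 / ((k : ℝ) + 1)) * (x ^ (k + 1) / (Nat.factorial (k + 1) : ℝ)) := by
      simp only [hadef]; ring
    rw [hsplit, hbdef]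
    simp only
    linarith
  have ha : Summable a := Summable.of_nonneg_of_le ha_nonneg hab hb
  -- put it together
  calc ∑' k : ℕ, (Real.log (k + 1) + 1 / (k + 1)) * x ^ (k + 1) / (Nat.factorial (k + 1) : ℝ)
      = ∑' k, a k := rfl
    _ ≤ ∑' k, b k := Summable.tsum_le_tsum hab ha hb
    _ = (Real.log x - 1) * (Real.exp x - 1) + Real.exp x
          + 2 * ((1 / x) * (Real.exp x - 1 - x)) := hbsum
    _ ≤ Real.exp x * Real.log x + 2 * Real.exp x / x := by
        have hxinv : 0 < 1 / x := by positivity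
        have expand : (Real.log x - 1) * (Real.exp x - 1) + Real.exp x
            + 2 * ((1 / x) * (Real.exp x - 1 - x))
            = Real.exp x * Real.log x + 2 * Real.exp x / x
              + (1 - 2 - Real.log x - 2 / x) := by
          field_simp
          ring
        rw [expand]
        have h2x : 0 < 2 / x := by positivity
        linarith
    _ ≤ Real.exp x * Real.log x
          + 2 * Real.exp Real.eulerMascheroniConstant * (n + 1) / Real.log n := by
        have h : 2 * Real.exp x / x ≤
            2 * Real.exp Real.eulerMascheroniConstant * (n + 1) / Real.log n := by
          apply div_le_div₀ (by positivity) (by nlinarith [Real.exp_pos x]) hlogn0 hlogn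
        linarith
end

section
/- Under the assumption that there exist constants 0 < β < 1/2 and C > 0 with σ(n) ≥ e^γ n log log n + C n log log n / (log n)^β for infinitely many n, together with the bounds σ(n) ≤ e^{H_n} log H_n + e^{H_n} E_1(H_n) for all sufficiently large n and e^{H_n} log H_n ≤ e^γ n log log n + (3 e^γ n)/(2 log n) for n ≥ 3, one derives a contradiction: the inequality (C/e^γ) log log n ≤ (log n)^{β-1} (5/2 + 1/n) cannot hold for infinitely many n. -/
open Real MeasureTheory

/-- The exponential integral `E_1(x) = ∫_x^∞ e^{-t}/t dt`. -/
noncomputable def E1 (x : ℝ) : ℝ := ∫ t in Set.Ioi x, Real.exp (-t) / t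

/-- The sum of divisors of `n`, as a real number. -/
noncomputable def sigma (n : ℕ) : ℝ := ∑ d ∈ n.divisors, (d : ℝ)

lemma H_eq (n : ℕ) : H n = (harmonic n : ℝ) := by
  simp [H, harmonic, one_div]

lemma log_le_H (n : ℕ) : Real.log n ≤ H n := by
  rw [H_eq]
  refine le_trans ?_ (log_add_one_le_harmonic n)
  rcases Nat.eq_zero_or_pos n with h|h
  · simp [h]
  apply Real.log_le_log (by exact_mod_cast h)
  push_cast; linarith

lemma E1_le (x : ℝ) (hx : 0 < x) : E1 x ≤ Real.exp (-x) / x := by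
  have hint : IntegrableOn (fun t => Real.exp (-t) / x) (Set.Ioi x) := by
    have := (exp_neg_integrableOn_Ioi x (b := 1) one_pos)
    simp only [neg_mul, one_mul] at this
    exact this.div_const x
  have hmeas : AEStronglyMeasurable (fun t => Real.exp (-t) / t)
      (volume.restrict (Set.Ioi x)) := by
    apply Measurable.aestronglyMeasurable
    exact (Real.measurable_exp.comp measurable_neg).div measurable_id
  have hptwise : ∀ t ∈ Set.Ioi x, Real.exp (-t) / t ≤ Real.exp (-t) / x := fun t ht =>
    div_le_div_of_nonneg_left (Real.exp_pos _).le hx (le_of_lt ht)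
  have hint2 : IntegrableOn (fun t => Real.exp (-t) / t) (Set.Ioi x) := by
    refine hint.mono' hmeas ?_
    filter_upwards [ae_restrict_mem measurableSet_Ioi] with t ht
    have htpos : 0 < t := hx.trans ht
    rw [Real.norm_eq_abs, abs_of_nonneg (div_nonneg (Real.exp_pos _).le htpos.le)]
    exact hptwise t ht
  calc E1 x ≤ ∫ t in Set.Ioi x, Real.exp (-t) / x :=
        setIntegral_mono_on hint2 hint measurableSet_Ioi hptwise
    _ = (∫ t in Set.Ioi x, Real.exp (-t)) / x := by rw [integral_div]
    _ = Real.exp (-x) / x := by rw [integral_exp_neg_Ioi]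

theorem robin_contradiction
    (β C : ℝ) (hβ0 : 0 < β) (hβ : β < 1 / 2) (hC : 0 < C)
    (hinf : {n : ℕ | Real.exp Real.eulerMascheroniConstant * n * Real.log (Real.log n) +
        C * n * Real.log (Real.log n) / (Real.log n) ^ β ≤ sigma n}.Infinite)
    (hupper : ∀ᶠ n : ℕ in Filter.atTop,
        sigma n ≤ Real.exp (H n) * Real.log (H n) + Real.exp (H n) * E1 (H n))
    (hlag : ∀ n : ℕ, 3 ≤ n →
        Real.exp (H n) * Real.log (H n) ≤
          Real.exp Real.eulerMascheroniConstant * n * Real.log (Real.log n) +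
            3 * Real.exp Real.eulerMascheroniConstant * n / (2 * Real.log n)) :
    False := by
  -- log log n → ∞ along ℕ
  have htend : Filter.Tendsto (fun n : ℕ => Real.log (Real.log n)) Filter.atTop Filter.atTop :=
    (Real.tendsto_log_atTop.comp Real.tendsto_log_atTop).comp tendsto_natCast_atTop_atTop
  set γ := Real.eulerMascheroniConstant with hγdef
  have hγpos : 0 < Real.exp γ := Real.exp_pos γ
  have heγ : Real.exp γ ≤ 3 := by
    have h1 : γ ≤ 1 := by
      have := Real.eulerMascheroniConstant_lt_two_thirds
      rw [hγdef]; linarith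
    have h2 : Real.exp γ ≤ Real.exp 1 := Real.exp_le_exp.mpr h1
    have := Real.exp_one_lt_d9
    linarith
  -- find a bad n
  have hbig : ∀ᶠ n : ℕ in Filter.atTop,
      (sigma n ≤ Real.exp (H n) * Real.log (H n) + Real.exp (H n) * E1 (H n)) ∧
      3 ≤ n ∧ (5/2 : ℝ) * Real.exp γ / C < Real.log (Real.log n) := by
    filter_upwards [hupper, Filter.eventually_ge_atTop 3,
      htend.eventually_gt_atTop ((5/2 : ℝ) * Real.exp γ / C)] with n h1 h2 h3
    exact ⟨h1, h2, h3⟩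
  obtain ⟨N, hN⟩ := Filter.eventually_atTop.mp hbig
  obtain ⟨n, hnS, hnN⟩ := hinf.exists_gt N
  obtain ⟨h1, h3n, hLbig⟩ := hN n hnN.le
  -- basic facts about n
  have hn3 : (3 : ℝ) ≤ n := by exact_mod_cast h3n
  have hlog1 : 1 ≤ Real.log n := by
    rw [show (1:ℝ) = Real.log (Real.exp 1) by simp]
    apply Real.log_le_log (Real.exp_pos 1)
    have := Real.exp_one_lt_d9; linarith
  have hlogpos : 0 < Real.log n := lt_of_lt_of_le one_pos hlog1
  have hHpos : 0 < H n := lt_of_lt_of_le hlogpos (log_le_H n)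
  have hLpos : 0 < Real.log (Real.log n) := lt_trans (by positivity) hLbig
  -- bound on the E1 term
  have hE1 : Real.exp (H n) * E1 (H n) ≤ 1 / Real.log n := by
    calc Real.exp (H n) * E1 (H n) ≤ Real.exp (H n) * (Real.exp (-(H n)) / H n) := by
          apply mul_le_mul_of_nonneg_left (E1_le _ hHpos) (Real.exp_pos _).le
      _ = 1 / H n := by
          rw [← mul_div_assoc, ← Real.exp_add]; simp
      _ ≤ 1 / Real.log n := by
          apply one_div_le_one_div_of_le hlogpos (log_le_H n)
  -- main chain
  have hchain : C * n * Real.log (Real.log n) / (Real.log n) ^ β ≤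
      3 * Real.exp γ * n / (2 * Real.log n) + 1 / Real.log n := by
    have := hnS
    simp only [Set.mem_setOf_eq] at this
    have h2 := hlag n h3n
    linarith [h1, hE1]
  -- (log n)^β ≤ log n
  have hrpow : (Real.log n) ^ β ≤ Real.log n := by
    calc (Real.log n) ^ β ≤ (Real.log n) ^ (1:ℝ) :=
          Real.rpow_le_rpow_of_exponent_le hlog1 (by linarith)
      _ = Real.log n := Real.rpow_one _
  have hrpowpos : 0 < (Real.log n) ^ β := Real.rpow_pos_of_pos hlogpos β
  have hnpos : (0:ℝ) < n := by linarith
  -- C * n * L / log n ≤ C * n * L / (log n)^β ≤ RHS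
  have hstep : C * n * Real.log (Real.log n) / Real.log n ≤
      3 * Real.exp γ * n / (2 * Real.log n) + 1 / Real.log n := by
    refine le_trans ?_ hchain
    apply div_le_div_of_nonneg_left (by positivity) hrpowpos hrpow
  -- multiply through by log n
  have hmul : C * n * Real.log (Real.log n) ≤ 3 * Real.exp γ * n / 2 + 1 := by
    have := mul_le_mul_of_nonneg_right hstep hlogpos.le
    rw [div_mul_cancel₀ _ (ne_of_gt hlogpos)] at this
    calc C * n * Real.log (Real.log n)
        ≤ (3 * Real.exp γ * n / (2 * Real.log n) + 1 / Real.log n) * Real.log n := this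
      _ = 3 * Real.exp γ * n / 2 + 1 := by
          field_simp
  -- conclude
  have hγnn : (0:ℝ) ≤ γ := by
    have := Real.one_half_lt_eulerMascheroniConstant
    linarith [hγdef.le, hγdef.ge]
  have h1le : (1:ℝ) ≤ Real.exp γ * n := by nlinarith [hγpos, Real.one_le_exp hγnn]
  have hfinal : C * n * Real.log (Real.log n) ≤ (5/2) * Real.exp γ * n := by
    nlinarith
  have : C * Real.log (Real.log n) ≤ (5/2) * Real.exp γ := by
    calc C * Real.log (Real.log n) = C * n * Real.log (Real.log n) / n := by
          field_simp
      _ ≤ (5/2) * Real.exp γ * n / n := by gcongr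
      _ = (5/2) * Real.exp γ := by field_simp
  have : Real.log (Real.log n) ≤ (5/2) * Real.exp γ / C := by
    rw [le_div_iff₀ hC]; linarith
  linarith
end
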